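/- arXiv:1902.06076 — 5 statements merged into one kernel-verified Lean document; each statement's English description precedes it below -/
import Mathlib

section
/- In the quotient ring B/o of bounded real sequences modulo the ideal o, the class d of the sequence n ↦ 1/(n+1) is a nonzero nilpotent element: d ≠ 0 and d² = 0. (Hence B/o has nonzero nilpotent elements and zero divisors.) -/
open Filter

def littleO : Set (ℕ → ℝ) :=
  {f : ℕ → ℝ | Filter.Tendsto (fun n : ℕ => (n : ℝ) * f n) Filter.atTop (nhds 0)}

/-- The subring of bounded real sequences. -/
def BddSeq : Subring (ℕ → ℝ) where
  carrier := {f : ℕ → ℝ | ∃ C : ℝ, ∀ n, |f n| ≤ C}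
  zero_mem' := ⟨0, fun n => by simp⟩
  one_mem' := ⟨1, fun n => by simp⟩
  add_mem' := by
    rintro x y ⟨C, hC⟩ ⟨D, hD⟩
    exact ⟨C + D, fun n => (abs_add_le _ _).trans (add_le_add (hC n) (hD n))⟩
  neg_mem' := by
    rintro x ⟨C, hC⟩
    exact ⟨C, fun n => by simpa using hC n⟩
  mul_mem' := by
    rintro x y ⟨C, hC⟩ ⟨D, hD⟩
    refine ⟨C * D, fun n => ?_⟩
    rw [Pi.mul_apply, abs_mul]
    exact mul_le_mul (hC n) (hD n) (abs_nonneg _) ((abs_nonneg _).trans (hC n))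

/-- `littleO` as an ideal of the ring of bounded sequences. -/
def littleOIdeal : Ideal BddSeq where
  carrier := {f : BddSeq | (f : ℕ → ℝ) ∈ littleO}
  zero_mem' := by simp [littleO]
  add_mem' := by
    rintro x y hx hy
    have := hx.add hy
    simp only [littleO, Set.mem_setOf_eq] at *
    simpa [mul_add] using this
  smul_mem' := by
    rintro c x hx
    obtain ⟨C, hC⟩ := c.2
    have h1 : Filter.Tendsto (fun n : ℕ => C * |(n : ℝ) * (x : ℕ → ℝ) n|)
        Filter.atTop (nhds 0) := by
      have := hx.abs.const_mul C
      simpa using this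
    refine squeeze_zero_norm (fun n => ?_) h1
    have hcx : ((c • x : BddSeq) : ℕ → ℝ) n = (c : ℕ → ℝ) n * (x : ℕ → ℝ) n := rfl
    rw [hcx]
    have : ‖(n : ℝ) * ((c : ℕ → ℝ) n * (x : ℕ → ℝ) n)‖
        = |(c : ℕ → ℝ) n| * |(n : ℝ) * (x : ℕ → ℝ) n| := by
      rw [Real.norm_eq_abs, ← abs_mul]; ring_nf
    rw [this]
    exact mul_le_mul_of_nonneg_right (hC n) (abs_nonneg _)

/-- Giordano's ambient ring ℝ̃ = B/o. -/
abbrev GiordanoAmbient : Type := BddSeq ⧸ littleOIdeal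

/-- Little-oh polynomials. -/
def LittleOhPoly (x : ℕ → ℝ) : Prop :=
  ∃ (k : ℕ) (r : ℝ) (α a : Fin k → ℝ), (∀ i, 0 ≤ a i) ∧
    (fun n : ℕ => x n - r - ∑ i, α i * (n : ℝ) ^ (-(a i))) ∈ littleO

lemma invSucc_bdd : (fun n : ℕ => 1 / ((n : ℝ) + 1)) ∈ BddSeq := by
  refine ⟨1, fun n => ?_⟩
  have h : (0:ℝ) < (n : ℝ) + 1 := by positivity
  rw [abs_of_pos (by positivity), div_le_one h]
  linarith

open Topology

/-!
If `n * f n → c`, then `f n = O(1/n)`, so `n * f n ^ 2 = (n * f n) * f n → c * 0 = 0`: the class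
of `f` squares to zero. If moreover `c ≠ 0`, then `f` itself is not `o(1/n)`. For `f n = 1/(n+1)`
the limit is `c = 1`.
-/

section TendstoNatCastMul

variable {f : ℕ → ℝ} {c : ℝ}

theorem tendsto_zero_of_tendsto_natCast_mul
    (h : Tendsto (fun n : ℕ => (n : ℝ) * f n) atTop (𝓝 c)) :
    Tendsto f atTop (𝓝 0) := by
  have hinv : Tendsto (fun n : ℕ => (n : ℝ)⁻¹) atTop (𝓝 0) :=
    tendsto_inv_atTop_zero.comp tendsto_natCast_atTop_atTop
  have hprod := h.mul hinv
  rw [mul_zero] at hprod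
  refine hprod.congr' ((eventually_ne_atTop 0).mono fun n hn => ?_)
  field_simp

theorem mul_self_mem_littleO_of_tendsto_natCast_mul
    (h : Tendsto (fun n : ℕ => (n : ℝ) * f n) atTop (𝓝 c)) : f * f ∈ littleO := by
  have hprod := h.mul (tendsto_zero_of_tendsto_natCast_mul h)
  rw [mul_zero] at hprod
  show Tendsto (fun n : ℕ => (n : ℝ) * (f n * f n)) atTop (𝓝 0)
  simpa only [mul_assoc] using hprod

theorem notMem_littleO_of_tendsto_natCast_mul
    (h : Tendsto (fun n : ℕ => (n : ℝ) * f n) atTop (𝓝 c)) (hc : c ≠ 0) : f ∉ littleO :=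
  fun h₀ => hc (tendsto_nhds_unique h h₀)

end TendstoNatCastMul

theorem mk_littleOIdeal_ne_zero_of_tendsto_natCast_mul {x : ↥BddSeq} {c : ℝ}
    (h : Tendsto (fun n : ℕ => (n : ℝ) * (x : ℕ → ℝ) n) atTop (𝓝 c)) (hc : c ≠ 0) :
    Ideal.Quotient.mk littleOIdeal x ≠ 0 := by
  rw [Ne, Ideal.Quotient.eq_zero_iff_mem]
  exact notMem_littleO_of_tendsto_natCast_mul h hc

theorem mk_littleOIdeal_sq_eq_zero_of_tendsto_natCast_mul {x : ↥BddSeq} {c : ℝ}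
    (h : Tendsto (fun n : ℕ => (n : ℝ) * (x : ℕ → ℝ) n) atTop (𝓝 c)) :
    Ideal.Quotient.mk littleOIdeal x ^ 2 = 0 := by
  rw [sq, ← map_mul, Ideal.Quotient.eq_zero_iff_mem]
  exact mul_self_mem_littleO_of_tendsto_natCast_mul h

theorem tendsto_natCast_mul_one_div_add_one :
    Tendsto (fun n : ℕ => (n : ℝ) * (1 / ((n : ℝ) + 1))) atTop (𝓝 1) := by
  simpa only [mul_one_div] using tendsto_natCast_div_add_atTop (1 : ℝ)

theorem giordano_ambient_nilpotent :
    Ideal.Quotient.mk littleOIdeal (⟨fun n : ℕ => 1 / ((n : ℝ) + 1), invSucc_bdd⟩ : BddSeq) ≠ 0 ∧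
    (Ideal.Quotient.mk littleOIdeal (⟨fun n : ℕ => 1 / ((n : ℝ) + 1), invSucc_bdd⟩ : BddSeq)) ^ 2 = 0 :=
  ⟨mk_littleOIdeal_ne_zero_of_tendsto_natCast_mul tendsto_natCast_mul_one_div_add_one one_ne_zero,
    mk_littleOIdeal_sq_eq_zero_of_tendsto_natCast_mul tendsto_natCast_mul_one_div_add_one⟩
end

section
/- The order on B/o is not total: for the bounded sequences x n = 1 − (−1)^n and y n = 1, there is no z ∈ o such that x n ≤ y n + z n for all sufficiently large n, and there is no z ∈ o such that y n ≤ x n + z n for all sufficiently large n. Hence the classes [x] and [1] are incomparable in B/o. -/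
open Filter

lemma littleO_tendsto {z : ℕ → ℝ} (hz : z ∈ littleO) :
    Filter.Tendsto z Filter.atTop (nhds 0) := by
  have h := hz.comp (tendsto_add_atTop_nat 1)
  have hinv : Filter.Tendsto (fun n : ℕ => ((n + 1 : ℕ) : ℝ)⁻¹) atTop (nhds 0) := by
    exact tendsto_one_div_add_atTop_nhds_zero_nat.congr (by intro n; push_cast; rw [one_div])
  have := h.mul hinv
  rw [zero_mul] at this
  have heq : ∀ n : ℕ, ((n + 1 : ℕ) : ℝ) * z (n + 1) * ((n + 1 : ℕ) : ℝ)⁻¹ = z (n + 1) := by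
    intro n
    rw [mul_comm, inv_mul_cancel_left₀ (by positivity)]
  have h2 : Filter.Tendsto (fun n : ℕ => z (n + 1)) atTop (nhds 0) :=
    this.congr heq
  exact (tendsto_add_atTop_iff_nat 1).mp h2

theorem giordano_ambient_order_not_total :
    ¬ (∃ z ∈ littleO, ∃ N : ℕ, ∀ n ≥ N, 1 - (-1 : ℝ) ^ n ≤ 1 + z n) ∧
    ¬ (∃ z ∈ littleO, ∃ N : ℕ, ∀ n ≥ N, (1 : ℝ) ≤ (1 - (-1 : ℝ) ^ n) + z n) := by
  constructor
  · rintro ⟨z, hz, N, hN⟩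
    have hsmall : ∀ᶠ n in atTop, z n < 1 :=
      (littleO_tendsto hz).eventually (eventually_lt_nhds one_pos)
    obtain ⟨M, hM⟩ := hsmall.exists_forall_of_atTop
    set n := 2 * (M + N) + 1 with hn
    have hodd : (-1 : ℝ) ^ n = -1 := Odd.neg_one_pow ⟨M + N, by omega⟩
    have h1 := hN n (by omega)
    have h2 := hM n (by omega)
    rw [hodd] at h1
    linarith
  · rintro ⟨z, hz, N, hN⟩
    have hsmall : ∀ᶠ n in atTop, z n < 1 :=
      (littleO_tendsto hz).eventually (eventually_lt_nhds one_pos)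
    obtain ⟨M, hM⟩ := hsmall.exists_forall_of_atTop
    set n := 2 * (M + N) with hn
    have heven : (-1 : ℝ) ^ n = 1 := Even.neg_one_pow ⟨M + N, by omega⟩
    have h1 := hN n (by omega)
    have h2 := hM n (by omega)
    rw [heven] at h1
    linarith
end

section
/- The set of little-oh polynomials is a subring of the ring of bounded real sequences: every little-oh polynomial is a bounded sequence, every constant sequence is a little-oh polynomial, and the set of little-oh polynomials is closed under pointwise addition, negation, and multiplication. -/
open Filter

/-!
Write a little-oh polynomial as `x = p + f` with `f ∈ o` and `p` in the real algebra spanned by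
the sequences `n ↦ n ^ (-a)`, `a ≥ 0`; these form a multiplicative monoid, so that algebra is
just their linear span, i.e. the sums `∑ αᵢ n ^ (-aᵢ)`. Both `p` and `f` are bounded, and `o` is
closed under addition and under multiplication by bounded sequences, so for `y = q + g` the
identity `x y - p q = x (y - q) + q (x - p)` shows that `x y` is again a little-oh polynomial.
-/

open Topology

def boundedSeq : Subalgebra ℝ (ℕ → ℝ) where
  carrier := {x | ∃ C, ∀ n, |x n| ≤ C}
  mul_mem' := by
    rintro x y ⟨C, hC⟩ ⟨D, hD⟩
    refine ⟨C * D, fun n => ?_⟩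
    rw [Pi.mul_apply, abs_mul]
    exact mul_le_mul (hC n) (hD n) (abs_nonneg _) ((abs_nonneg _).trans (hC 0))
  add_mem' := by
    rintro x y ⟨C, hC⟩ ⟨D, hD⟩
    exact ⟨C + D, fun n => (abs_add_le _ _).trans (add_le_add (hC n) (hD n))⟩
  algebraMap_mem' r := ⟨|r|, fun _ => le_rfl⟩

theorem mem_boundedSeq_of_tendsto {x : ℕ → ℝ} {l : ℝ} (hx : Tendsto x atTop (𝓝 l)) :
    x ∈ boundedSeq := by
  obtain ⟨C, hC⟩ := isBounded_iff_forall_norm_le.1 (Metric.isBounded_range_of_tendsto x hx)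
  exact ⟨C, fun n => hC _ ⟨n, rfl⟩⟩

section littleO

variable {f g : ℕ → ℝ}

theorem zero_mem_littleO : (0 : ℕ → ℝ) ∈ littleO := by
  simp [littleO]

theorem add_mem_littleO (hf : f ∈ littleO) (hg : g ∈ littleO) : f + g ∈ littleO := by
  simpa [littleO, mul_add] using hf.add hg

theorem mul_mem_littleO_of_mem_boundedSeq (hg : g ∈ boundedSeq) (hf : f ∈ littleO) :
    g * f ∈ littleO := by
  obtain ⟨C, hC⟩ := hg
  have hbdd : IsBoundedUnder (· ≤ ·) atTop (norm ∘ g) := isBoundedUnder_of ⟨C, hC⟩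
  simpa [littleO, mul_left_comm] using isBoundedUnder_le_mul_tendsto_zero hbdd hf

theorem tendsto_zero_of_mem_littleO (hf : f ∈ littleO) : Tendsto f atTop (𝓝 0) := by
  refine (hf.div_atTop tendsto_natCast_atTop_atTop).congr' ?_
  filter_upwards [eventually_ne_atTop 0] with n hn
  field_simp

theorem littleO_subset_boundedSeq : littleO ⊆ boundedSeq :=
  fun _ hf => mem_boundedSeq_of_tendsto (tendsto_zero_of_mem_littleO hf)

end littleO

-- Holds at `n = 0` too, where `0 ^ 0 = 1` and `0 ^ (-a) = 0` for `a > 0`.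
theorem natCast_rpow_neg_add {a b : ℝ} (ha : 0 ≤ a) (hb : 0 ≤ b) (n : ℕ) :
    (n : ℝ) ^ (-(a + b)) = (n : ℝ) ^ (-a) * (n : ℝ) ^ (-b) := by
  rcases (add_nonneg ha hb).eq_or_lt with hab | hab
  · simp [(add_eq_zero_iff_of_nonneg ha hb).1 hab.symm]
  · rw [neg_add, Real.rpow_add' n.cast_nonneg (by linarith)]

def negRpowSeq : Submonoid (ℕ → ℝ) where
  carrier := {f | ∃ a : ℝ, 0 ≤ a ∧ f = fun n : ℕ => (n : ℝ) ^ (-a)}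
  mul_mem' := by
    rintro _ _ ⟨a, ha, rfl⟩ ⟨b, hb, rfl⟩
    exact ⟨a + b, add_nonneg ha hb, funext fun n => (natCast_rpow_neg_add ha hb n).symm⟩
  one_mem' := ⟨0, le_rfl, by simp [Pi.one_def]⟩

def negRpowPoly : Subalgebra ℝ (ℕ → ℝ) := Algebra.adjoin ℝ negRpowSeq

theorem mem_negRpowPoly {p : ℕ → ℝ} :
    p ∈ negRpowPoly ↔ ∃ (k : ℕ) (α a : Fin k → ℝ), (∀ i, 0 ≤ a i) ∧
      p = fun n : ℕ => ∑ i, α i * (n : ℝ) ^ (-(a i)) := by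
  rw [← Subalgebra.mem_toSubmodule, negRpowPoly, Algebra.adjoin_eq_span, Submonoid.closure_eq,
    Submodule.mem_span_set']
  constructor
  · rintro ⟨k, α, g, rfl⟩
    choose a ha hg using fun i => (g i).2
    exact ⟨k, α, a, ha, funext fun n => by simp [Finset.sum_apply, hg]⟩
  · rintro ⟨k, α, a, ha, rfl⟩
    exact ⟨k, α, fun i => ⟨_, a i, ha i, rfl⟩, funext fun n => by simp [Finset.sum_apply]⟩

theorem negRpowSeq_subset_boundedSeq : (negRpowSeq : Set (ℕ → ℝ)) ⊆ boundedSeq := by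
  rintro _ ⟨a, ha, rfl⟩
  refine ⟨1, fun n => ?_⟩
  rw [abs_of_nonneg (by positivity)]
  rcases n.eq_zero_or_pos with rfl | hn
  · simpa using Real.zero_rpow_le_one (-a)
  · exact Real.rpow_le_one_of_one_le_of_nonpos (by exact_mod_cast hn) (by linarith)

theorem negRpowPoly_le_boundedSeq : negRpowPoly ≤ boundedSeq :=
  Algebra.adjoin_le negRpowSeq_subset_boundedSeq

theorem littleOhPoly_iff {x : ℕ → ℝ} :
    LittleOhPoly x ↔ ∃ p ∈ negRpowPoly, x - p ∈ littleO := by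
  constructor
  · rintro ⟨k, r, α, a, ha, hx⟩
    refine ⟨algebraMap ℝ _ r + fun n : ℕ => ∑ i, α i * (n : ℝ) ^ (-(a i)),
      add_mem (algebraMap_mem _ r) (mem_negRpowPoly.2 ⟨k, α, a, ha, rfl⟩), ?_⟩
    convert hx using 1
    funext n
    simp [sub_sub]
  · rintro ⟨p, hp, hxp⟩
    obtain ⟨k, α, a, ha, rfl⟩ := mem_negRpowPoly.1 hp
    exact ⟨k, 0, α, a, ha, by simpa [Pi.sub_def] using hxp⟩

theorem LittleOhPoly.mem_boundedSeq {x : ℕ → ℝ} (hx : LittleOhPoly x) : x ∈ boundedSeq := by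
  obtain ⟨p, hp, hxp⟩ := littleOhPoly_iff.1 hx
  simpa using add_mem (negRpowPoly_le_boundedSeq hp) (littleO_subset_boundedSeq hxp)

def littleOhPolySubalgebra : Subalgebra ℝ (ℕ → ℝ) where
  carrier := {x | LittleOhPoly x}
  mul_mem' := by
    intro x y hx hy
    obtain ⟨p, hp, hxp⟩ := littleOhPoly_iff.1 hx
    obtain ⟨q, hq, hyq⟩ := littleOhPoly_iff.1 hy
    refine littleOhPoly_iff.2 ⟨p * q, mul_mem hp hq, ?_⟩
    rw [show x * y - p * q = x * (y - q) + q * (x - p) by ring]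
    exact add_mem_littleO (mul_mem_littleO_of_mem_boundedSeq hx.mem_boundedSeq hyq)
      (mul_mem_littleO_of_mem_boundedSeq (negRpowPoly_le_boundedSeq hq) hxp)
  add_mem' := by
    intro x y hx hy
    obtain ⟨p, hp, hxp⟩ := littleOhPoly_iff.1 hx
    obtain ⟨q, hq, hyq⟩ := littleOhPoly_iff.1 hy
    refine littleOhPoly_iff.2 ⟨p + q, add_mem hp hq, ?_⟩
    rw [show x + y - (p + q) = (x - p) + (y - q) by ring]
    exact add_mem_littleO hxp hyq
  algebraMap_mem' r := littleOhPoly_iff.2 ⟨_, algebraMap_mem _ r, by simpa using zero_mem_littleO⟩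

theorem littleOhPoly_subring_of_bounded :
    (∀ x : ℕ → ℝ, LittleOhPoly x → ∃ C : ℝ, ∀ n, |x n| ≤ C) ∧
    (∀ r : ℝ, LittleOhPoly (fun _ : ℕ => r)) ∧
    (∀ x y : ℕ → ℝ, LittleOhPoly x → LittleOhPoly y → LittleOhPoly (x + y)) ∧
    (∀ x : ℕ → ℝ, LittleOhPoly x → LittleOhPoly (-x)) ∧
    (∀ x y : ℕ → ℝ, LittleOhPoly x → LittleOhPoly y → LittleOhPoly (x * y)) :=
  ⟨fun _ hx => hx.mem_boundedSeq,
    fun r => littleOhPolySubalgebra.algebraMap_mem r,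
    fun _ _ => littleOhPolySubalgebra.add_mem,
    fun _ => littleOhPolySubalgebra.neg_mem,
    fun _ _ => littleOhPolySubalgebra.mul_mem⟩
end

section
/- Giordano's ring •ℝ is linearly ordered: for any two little-oh polynomials x and y, either there exists z ∈ o with x n ≤ y n + z n for all sufficiently large n, or there exists z ∈ o with y n ≤ x n + z n for all sufficiently large n; i.e., the classes [x] and [y] in B/o are always comparable. -/
open Filter

open Finset in
lemma sign_lemma {ι : Type*} [Fintype ι] (β b : ι → ℝ) :
    (∀ᶠ n : ℕ in atTop, 0 ≤ ∑ i, β i * (n:ℝ) ^ (-(b i))) ∨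
    (∀ᶠ n : ℕ in atTop, ∑ i, β i * (n:ℝ) ^ (-(b i)) ≤ 0) := by
  classical
  set E : Finset ℝ := Finset.univ.image b with hE
  set γ : ℝ → ℝ := fun e => ∑ i ∈ Finset.univ.filter (fun i => b i = e), β i with hγ
  have hrw : ∀ n : ℕ, ∑ i, β i * (n:ℝ) ^ (-(b i)) = ∑ e ∈ E, γ e * (n:ℝ) ^ (-e) := by
    intro n
    rw [← Finset.sum_fiberwise_of_maps_to
      (fun i _ => Finset.mem_image_of_mem b (Finset.mem_univ i))]
    refine Finset.sum_congr rfl fun e he => ?_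
    rw [hγ, Finset.sum_mul]
    refine Finset.sum_congr rfl fun i hi => ?_
    rw [(Finset.mem_filter.mp hi).2]
  set S : Finset ℝ := E.filter (fun e => γ e ≠ 0) with hS
  by_cases hSe : S.Nonempty
  · set e₀ := S.min' hSe with he₀
    have he₀S : e₀ ∈ S := S.min'_mem hSe
    have hγ0 : γ e₀ ≠ 0 := (Finset.mem_filter.mp he₀S).2
    have he₀E : e₀ ∈ E := (Finset.mem_filter.mp he₀S).1
    have hlim : Tendsto (fun n : ℕ => (∑ i, β i * (n:ℝ) ^ (-(b i))) * (n:ℝ) ^ e₀)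
        atTop (nhds (γ e₀)) := by
      have key : ∀ᶠ n : ℕ in atTop,
          ∑ e ∈ E, γ e * (n:ℝ) ^ (e₀ - e)
            = (∑ i, β i * (n:ℝ) ^ (-(b i))) * (n:ℝ) ^ e₀ := by
        filter_upwards [eventually_ge_atTop 1] with n hn
        have hn0 : (0:ℝ) < n := by exact_mod_cast hn
        rw [hrw, Finset.sum_mul]
        refine Finset.sum_congr rfl fun e he => ?_
        rw [mul_assoc, ← Real.rpow_add hn0]
        ring_nf
      rw [← tendsto_congr' key]
      have : Tendsto (fun n : ℕ => ∑ e ∈ E, γ e * (n:ℝ) ^ (e₀ - e)) atTop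
          (nhds (∑ e ∈ E, if e = e₀ then γ e₀ else 0)) := by
        refine tendsto_finset_sum _ fun e he => ?_
        by_cases h1 : e = e₀
        · simp only [h1, if_pos rfl, sub_self, Real.rpow_zero, mul_one]
          exact tendsto_const_nhds
        · rw [if_neg h1]
          by_cases h2 : γ e = 0
          · simp [h2]
          · have heS : e ∈ S := Finset.mem_filter.mpr ⟨he, h2⟩
            have hlt : e₀ < e := lt_of_le_of_ne (S.min'_le e heS) (fun h => h1 h.symm)
            have hneg : e₀ - e < 0 := by linarith
            have h3 : Tendsto (fun x : ℝ => x ^ (e₀ - e)) atTop (nhds 0) := by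
              have := tendsto_rpow_neg_atTop (y := e - e₀) (by linarith)
              convert this using 2
              ring
            have h4 : Tendsto (fun n : ℕ => (n:ℝ) ^ (e₀ - e)) atTop (nhds 0) :=
              h3.comp tendsto_natCast_atTop_atTop
            simpa using h4.const_mul (γ e)
      simpa [Finset.sum_ite_eq' E e₀ (fun _ => γ e₀), he₀E] using this
    rcases hγ0.lt_or_gt with hneg | hpos
    · right
      have hev := hlim.eventually (gt_mem_nhds hneg)
      filter_upwards [hev, eventually_ge_atTop 1] with n h1 h2
      have hn0 : (0:ℝ) < n := by exact_mod_cast h2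
      have hp : (0:ℝ) < (n:ℝ) ^ e₀ := Real.rpow_pos_of_pos hn0 _
      nlinarith [h1, hp]
    · left
      have hev := hlim.eventually (lt_mem_nhds hpos)
      filter_upwards [hev, eventually_ge_atTop 1] with n h1 h2
      have hn0 : (0:ℝ) < n := by exact_mod_cast h2
      have hp : (0:ℝ) < (n:ℝ) ^ e₀ := Real.rpow_pos_of_pos hn0 _
      nlinarith [h1, hp]
  · left
    have : ∀ n : ℕ, ∑ i, β i * (n:ℝ) ^ (-(b i)) = 0 := by
      intro n
      rw [hrw]
      refine Finset.sum_eq_zero fun e he => ?_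
      have : γ e = 0 := by
        by_contra h
        exact hSe ⟨e, Finset.mem_filter.mpr ⟨he, h⟩⟩
      rw [this, zero_mul]
    exact Eventually.of_forall fun n => le_of_eq (this n).symm

theorem giordano_linearly_ordered :
    ∀ x y : ℕ → ℝ, LittleOhPoly x → LittleOhPoly y →
      (∃ z ∈ littleO, ∃ N : ℕ, ∀ n ≥ N, x n ≤ y n + z n) ∨
      (∃ z ∈ littleO, ∃ N : ℕ, ∀ n ≥ N, y n ≤ x n + z n) := by
  rintro x y ⟨kx, rx, αx, ax, hax, hfx⟩ ⟨ky, ry, αy, ay, hay, hfy⟩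
  classical
  set fx : ℕ → ℝ := fun n => x n - rx - ∑ i, αx i * (n:ℝ) ^ (-(ax i)) with hfxd
  set fy : ℕ → ℝ := fun n => y n - ry - ∑ i, αy i * (n:ℝ) ^ (-(ay i)) with hfyd
  set β : Option (Fin kx ⊕ Fin ky) → ℝ :=
    fun i => i.elim (rx - ry) (Sum.elim αx (fun j => -αy j)) with hβ
  set b : Option (Fin kx ⊕ Fin ky) → ℝ := fun i => i.elim 0 (Sum.elim ax ay) with hb
  have hsum : ∀ n : ℕ, ∑ i, β i * (n:ℝ) ^ (-(b i))
      = (rx - ry) + ((∑ i, αx i * (n:ℝ) ^ (-(ax i))) - ∑ j, αy j * (n:ℝ) ^ (-(ay j))) := by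
    intro n
    rw [Fintype.sum_option, Fintype.sum_sum_type]
    simp only [hβ, hb, Option.elim, Sum.elim_inl, Sum.elim_inr, neg_zero, Real.rpow_zero,
      mul_one, neg_mul, Finset.sum_neg_distrib]
    ring
  have hdecomp : ∀ n : ℕ, x n - y n = (fx n - fy n) + ∑ i, β i * (n:ℝ) ^ (-(b i)) := by
    intro n
    rw [hsum]
    simp only [hfxd, hfyd]
    ring
  have hzx : (fun n => fx n - fy n) ∈ littleO := by
    have := hfx.sub hfy
    simpa [mul_sub, littleO] using this
  have hzy : (fun n => fy n - fx n) ∈ littleO := by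
    have := hfy.sub hfx
    simpa [mul_sub, littleO] using this
  rcases sign_lemma β b with h | h
  · right
    rcases eventually_atTop.mp h with ⟨N, hN⟩
    refine ⟨fun n => fy n - fx n, hzy, N, fun n hn => ?_⟩
    have := hdecomp n
    have := hN n hn
    show y n ≤ x n + (fy n - fx n)
    linarith
  · left
    rcases eventually_atTop.mp h with ⟨N, hN⟩
    refine ⟨fun n => fx n - fy n, hzx, N, fun n hn => ?_⟩
    have := hdecomp n
    have := hN n hn
    show x n ≤ y n + (fx n - fy n)
    linarith
end

section
/- There is a canonical surjective order-preserving ring homomorphism i from the finite part of Henle's ring onto B/o: letting F be the subring of Filter.Germ (Filter.cofinite : Filter ℕ) ℝ consisting of the finite elements (those r with −(n:ℝ) ≤ r ≤ (n:ℝ) for some natural n, where reals embed as constant germs), there exists a ring homomorphism i : F →+* B/o such that i sends the cofinite germ of every bounded sequence x to the class [x] in B/o, i is surjective, and i is order preserving: for bounded sequences x, y, if x n ≤ y n for all but finitely many n, then there exists z ∈ o with x n ≤ y n + z n for all sufficiently large n (i.e. [x] ≤ [y] in B/o). -/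
open Filter

/-- Henle's ring: germs of real sequences at the cofinite (Fréchet) filter on ℕ. -/
abbrev HenleRing : Type := Filter.Germ (Filter.cofinite : Filter ℕ) ℝ

/-- The subring of finite elements of Henle's ring. -/
def HenleFinite : Subring HenleRing where
  carrier := {r : HenleRing | ∃ n : ℕ, -(((n : ℝ)) : HenleRing) ≤ r ∧ r ≤ (((n : ℝ)) : HenleRing)}
  zero_mem' := ⟨0, by
    have h : (((0 : ℕ) : ℝ) : HenleRing) = 0 := by norm_num; rfl
    rw [h]
    simp⟩
  one_mem' := ⟨1, by
    have h : (((1 : ℕ) : ℝ) : HenleRing) = 1 := by norm_num; rfl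
    rw [h]
    exact ⟨Filter.Germ.const_le (by norm_num : (-1:ℝ) ≤ 1), le_refl _⟩⟩
  neg_mem' := by
    rintro r ⟨n, h1, h2⟩
    exact ⟨n, neg_le_neg h2, by simpa using neg_le_neg h1⟩
  add_mem' := by
    rintro r s ⟨n, hn1, hn2⟩ ⟨m, hm1, hm2⟩
    have hcast : (((n + m : ℕ) : ℝ)) = ((n : ℝ) + (m : ℝ)) := by push_cast; ring
    refine ⟨n + m, ?_, ?_⟩
    · rw [hcast]
      have h := add_le_add hn1 hm1
      rw [← neg_add] at h
      exact h
    · rw [hcast]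
      exact add_le_add hn2 hm2
  mul_mem' := by
    rintro r s ⟨n, hn1, hn2⟩ ⟨m, hm1, hm2⟩
    obtain ⟨x, rfl⟩ := Quot.exists_rep r
    obtain ⟨y, rfl⟩ := Quot.exists_rep s
    have hx1 : ∀ᶠ k in (Filter.cofinite : Filter ℕ), -(n : ℝ) ≤ x k :=
      Filter.Germ.coe_le.mp hn1
    have hx2 : ∀ᶠ k in (Filter.cofinite : Filter ℕ), x k ≤ (n : ℝ) :=
      Filter.Germ.coe_le.mp hn2
    have hy1 : ∀ᶠ k in (Filter.cofinite : Filter ℕ), -(m : ℝ) ≤ y k :=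
      Filter.Germ.coe_le.mp hm1
    have hy2 : ∀ᶠ k in (Filter.cofinite : Filter ℕ), y k ≤ (m : ℝ) :=
      Filter.Germ.coe_le.mp hm2
    have hcast : (((n * m : ℕ) : ℝ)) = ((n : ℝ) * (m : ℝ)) := by push_cast; ring
    have habs : ∀ᶠ k in (Filter.cofinite : Filter ℕ), |x k * y k| ≤ (n : ℝ) * m := by
      filter_upwards [hx1, hx2, hy1, hy2] with k h1 h2 h3 h4
      rw [abs_mul]
      exact mul_le_mul (abs_le.2 ⟨h1, h2⟩) (abs_le.2 ⟨h3, h4⟩) (abs_nonneg _)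
        (Nat.cast_nonneg n)
    refine ⟨n * m, ?_, ?_⟩
    · rw [hcast]
      exact Filter.Germ.coe_le.mpr <| habs.mono fun k hk => by
        simpa using (abs_le.1 hk).1
    · rw [hcast]
      exact Filter.Germ.coe_le.mpr <| habs.mono fun k hk => (abs_le.1 hk).2

open Filter

/-!
Taking germs is a surjective ring homomorphism `B → F`: a finite germ is bounded by some `n`
eventually, so clamping any representative to `[-n, n]` gives a bounded representative. Its kernel
consists of the eventually vanishing sequences, which lie in `o`, so the quotient map `B → B/o`
factors through it. The order statement holds because if `x ≤ y` cofinitely then the correction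
`max (x - y) 0` vanishes cofinitely, hence lies in `o`.
-/

lemma mem_littleO_of_eventually_eq_zero {f : ℕ → ℝ} (h : ∀ᶠ n in cofinite, f n = 0) :
    f ∈ littleO := by
  rw [Nat.cofinite_eq_atTop] at h
  refine tendsto_const_nhds.congr' ?_
  filter_upwards [h] with n hn
  simp [hn]

lemma exists_mem_littleO_le_add_of_eventually_le {x y : ℕ → ℝ}
    (h : ∀ᶠ n in cofinite, x n ≤ y n) : ∃ z ∈ littleO, ∀ n, x n ≤ y n + z n :=
  ⟨fun n => max (x n - y n) 0,
    mem_littleO_of_eventually_eq_zero (h.mono fun _ hn => max_eq_right (sub_nonpos.2 hn)),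
    fun n => by linarith [le_max_left (x n - y n) 0]⟩

lemma coe_mem_henleFinite {x : ℕ → ℝ} (hx : x ∈ BddSeq) : (x : HenleRing) ∈ HenleFinite := by
  obtain ⟨C, hC⟩ := hx
  have hCn (k : ℕ) : |x k| ≤ ⌈C⌉₊ := (hC k).trans (Nat.le_ceil C)
  exact ⟨⌈C⌉₊, Germ.coe_le.2 (.of_forall fun k => neg_le_of_abs_le (hCn k)),
    Germ.coe_le.2 (.of_forall fun k => le_of_abs_le (hCn k))⟩

lemma exists_mem_bddSeq_coe_eq {r : HenleRing} (hr : r ∈ HenleFinite) :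
    ∃ x ∈ BddSeq, (x : HenleRing) = r := by
  obtain ⟨c, hlo, hhi⟩ := hr
  induction r using Germ.inductionOn with | h u => ?_
  refine ⟨fun k => max (-c) (min (u k) c), ⟨c, fun k => abs_le.2 ⟨le_max_left _ _, ?_⟩⟩, ?_⟩
  · exact max_le (neg_le_self c.cast_nonneg) (min_le_right _ _)
  · refine Germ.coe_eq.2 ?_
    filter_upwards [Germ.coe_le.1 hlo, Germ.coe_le.1 hhi] with k hk₁ hk₂
    simpa [min_eq_left hk₂] using hk₁

def bddSeqToHenleFinite : BddSeq →+* HenleFinite :=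
  ((Germ.coeRingHom cofinite).comp BddSeq.subtype).codRestrict HenleFinite
    fun x => coe_mem_henleFinite x.2

lemma bddSeqToHenleFinite_surjective : Function.Surjective bddSeqToHenleFinite := by
  rintro ⟨r, hr⟩
  obtain ⟨x, hx, rfl⟩ := exists_mem_bddSeq_coe_eq hr
  exact ⟨⟨x, hx⟩, rfl⟩

lemma ker_bddSeqToHenleFinite_le :
    RingHom.ker bddSeqToHenleFinite ≤ RingHom.ker (Ideal.Quotient.mk littleOIdeal) := by
  intro x hx
  rw [RingHom.mem_ker, Ideal.Quotient.eq_zero_iff_mem]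
  exact mem_littleO_of_eventually_eq_zero (Germ.coe_eq.1 (congrArg Subtype.val hx))

noncomputable def henleFiniteToGiordanoAmbient : HenleFinite →+* GiordanoAmbient :=
  bddSeqToHenleFinite.liftOfSurjective bddSeqToHenleFinite_surjective
    ⟨Ideal.Quotient.mk littleOIdeal, ker_bddSeqToHenleFinite_le⟩

lemma henleFiniteToGiordanoAmbient_apply (x : BddSeq) :
    henleFiniteToGiordanoAmbient (bddSeqToHenleFinite x) = Ideal.Quotient.mk littleOIdeal x :=
  RingHom.liftOfRightInverse_comp_apply _ _ _ _ x

lemma henleFiniteToGiordanoAmbient_surjective :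
    Function.Surjective henleFiniteToGiordanoAmbient := fun q => by
  obtain ⟨x, rfl⟩ := Ideal.Quotient.mk_surjective q
  exact ⟨_, henleFiniteToGiordanoAmbient_apply x⟩

theorem canonical_hom_henle_finite_to_giordano_ambient :
    ∃ i : HenleFinite →+* GiordanoAmbient,
      (∀ (x : ℕ → ℝ) (hb : x ∈ BddSeq) (hf : (↑x : HenleRing) ∈ HenleFinite),
        i ⟨(↑x : HenleRing), hf⟩ = Ideal.Quotient.mk littleOIdeal ⟨x, hb⟩) ∧
      Function.Surjective i ∧
      (∀ x y : ℕ → ℝ, x ∈ BddSeq → y ∈ BddSeq →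
        (∀ᶠ n in (Filter.cofinite : Filter ℕ), x n ≤ y n) →
        ∃ z ∈ littleO, ∃ N : ℕ, ∀ n ≥ N, x n ≤ y n + z n) := by
  refine ⟨henleFiniteToGiordanoAmbient, fun x hb _ => henleFiniteToGiordanoAmbient_apply ⟨x, hb⟩,
    henleFiniteToGiordanoAmbient_surjective, fun x y _ _ hle => ?_⟩
  obtain ⟨z, hz, hxy⟩ := exists_mem_littleO_le_add_of_eventually_le hle
  exact ⟨z, hz, 0, fun n _ => hxy n⟩
end
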